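/- (Lemma L2) Assume ν̄ᵢ > 0 for all i, U positive definite and W positive semidefinite. Suppose there exist a real n×m matrix K̄ and a positive semidefinite n×n matrix S̄ with φ(K̄, S̄) ≺ S̄. Then for every positive semidefinite initial matrix S₀, the sequence S_{k+1} = Π_c(S_k) is bounded: there exists an n×n matrix M_{S₀} such that S_k ⪯ M_{S₀} for all k ∈ ℕ. -/

import Mathlib

open Matrix

/-- The scalar η_I = √(∏_{i∈I} ν̄ᵢ · ∏_{i∉I}(1−ν̄ᵢ)). -/
noncomputable def eta {m : ℕ} (ν : Fin m → ℝ) (I : Finset (Fin m)) : ℝ :=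
  Real.sqrt ((∏ i ∈ I, ν i) * (∏ i ∈ Iᶜ, (1 - ν i)))

/-- The m×m diagonal 0/1 matrix N_I whose i-th diagonal entry is 1 exactly when i ∈ I. -/
def NI {m : ℕ} (I : Finset (Fin m)) : Matrix (Fin m) (Fin m) ℝ :=
  Matrix.diagonal fun i => if i ∈ I then 1 else 0

/-- φ(K,X) = Σ_{I⊆{1,…,m}} η_I² (F_I(K) X F_I(K)ᵀ + V_I(K)), where
F_I(K) = Aᵀ + K N_I Bᵀ and V_I(K) = W + K N_I U N_I Kᵀ. -/
noncomputable def phi {m n : ℕ} (ν : Fin m → ℝ) (A W : Matrix (Fin n) (Fin n) ℝ)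
    (B : Matrix (Fin n) (Fin m) ℝ) (U : Matrix (Fin m) (Fin m) ℝ)
    (K : Matrix (Fin n) (Fin m) ℝ) (X : Matrix (Fin n) (Fin n) ℝ) :
    Matrix (Fin n) (Fin n) ℝ :=
  ∑ I : Finset (Fin m), (eta ν I) ^ 2 •
    ((Aᵀ + K * NI I * Bᵀ) * X * (Aᵀ + K * NI I * Bᵀ)ᵀ + (W + K * NI I * U * NI I * Kᵀ))

/-- M(X) = Σ_{I⊆{1,…,m}} η_I² N_I (U + Bᵀ X B) N_I. -/
noncomputable def Mop {m n : ℕ} (ν : Fin m → ℝ) (B : Matrix (Fin n) (Fin m) ℝ)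
    (U : Matrix (Fin m) (Fin m) ℝ) (X : Matrix (Fin n) (Fin n) ℝ) :
    Matrix (Fin m) (Fin m) ℝ :=
  ∑ I : Finset (Fin m), (eta ν I) ^ 2 • (NI I * (U + Bᵀ * X * B) * NI I)

/-- The modified algebraic Riccati operator
Π_c(X) = Aᵀ X A + W − Aᵀ X B N̄ M(X)⁻¹ N̄ Bᵀ X A, where N̄ = diag(ν̄₁,…,ν̄ₘ). -/
noncomputable def Pic {m n : ℕ} (ν : Fin m → ℝ) (A W : Matrix (Fin n) (Fin n) ℝ)
    (B : Matrix (Fin n) (Fin m) ℝ) (U : Matrix (Fin m) (Fin m) ℝ)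
    (X : Matrix (Fin n) (Fin n) ℝ) : Matrix (Fin n) (Fin n) ℝ :=
  Aᵀ * X * A + W -
    Aᵀ * X * B * Matrix.diagonal ν * (Mop ν B U X)⁻¹ * Matrix.diagonal ν * Bᵀ * X * A

/-!
Completing the square in the gain shows that, for `X ⪰ 0`,
`φ(K, X) = Π_c(X) + (K - K*) M(X) (K - K*)ᵀ` with the optimal gain
`K* = -Aᵀ X B N̄ M(X)⁻¹`; hence `0 ⪯ Π_c(X) = φ(K*, X) ⪯ φ(K̄, X)`.
Since `φ(K̄, ·)` is monotone and `φ(K̄, α X) ⪯ α φ(K̄, X)` for `α ≥ 1`, the Loewner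
interval `[0, α S̄]` is invariant under `Π_c` as soon as `φ(K̄, S̄) ⪯ S̄`. Strictness makes
`S̄` positive definite, so some such interval contains `S₀`.
-/

open scoped MatrixOrder

section eta
variable {m : ℕ} {ν : Fin m → ℝ}

lemma eta_sq (hν : ∀ i, ν i ∈ Set.Icc (0 : ℝ) 1) (I : Finset (Fin m)) :
    eta ν I ^ 2 = (∏ i ∈ I, ν i) * ∏ i ∈ Iᶜ, (1 - ν i) :=
  Real.sq_sqrt <| mul_nonneg (Finset.prod_nonneg fun i _ => (hν i).1)
    (Finset.prod_nonneg fun i _ => sub_nonneg.2 (hν i).2)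

lemma sum_eta_sq (hν : ∀ i, ν i ∈ Set.Icc (0 : ℝ) 1) : ∑ I, eta ν I ^ 2 = 1 := by
  simpa [eta_sq hν] using (Fintype.prod_add ν (fun i => 1 - ν i)).symm

lemma sum_eta_sq_smul_NI (hν : ∀ i, ν i ∈ Set.Icc (0 : ℝ) 1) :
    ∑ I, eta ν I ^ 2 • NI I = diagonal ν := by
  ext i j
  obtain rfl | hij := eq_or_ne i j
  · -- expand `ν i = ∏ⱼ (ν j + [j ≠ i] (1 - ν j))` as a sum over the subsets `I`
    have key := Fintype.prod_add ν (fun j => if j = i then 0 else 1 - ν j)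
    rw [Fintype.prod_eq_single i (fun j hj => by simp [hj])] at key
    simp only [Matrix.sum_apply, Matrix.smul_apply, NI, diagonal_apply_eq, smul_eq_mul, if_pos,
      add_zero] at key ⊢
    rw [key]
    refine Finset.sum_congr rfl fun I _ => ?_
    rw [eta_sq hν]
    by_cases hi : i ∈ I
    · rw [if_pos hi, mul_one]
      congr 1
      refine Finset.prod_congr rfl fun j hj => ?_
      rw [if_neg (by rintro rfl; exact Finset.mem_compl.1 hj hi)]
    · rw [if_neg hi, mul_zero, eq_comm]
      exact mul_eq_zero_of_right _ <| Finset.prod_eq_zero (Finset.mem_compl.2 hi) (by simp)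
  · simp [Matrix.sum_apply, NI, hij]

end eta

lemma add_mul_inv_mul_transpose_add {ι κ R : Type*} [Fintype κ] [DecidableEq κ] [CommRing R]
    {M : Matrix κ κ R} (hM : IsUnit M.det) (hMt : Mᵀ = M) (K G : Matrix ι κ R) :
    (K + G * M⁻¹) * M * (K + G * M⁻¹)ᵀ = K * M * Kᵀ + K * Gᵀ + G * Kᵀ + G * M⁻¹ * Gᵀ := by
  rw [transpose_add, transpose_mul, transpose_nonsing_inv, hMt]
  simp only [Matrix.add_mul, Matrix.mul_add, Matrix.mul_assoc, mul_nonsing_inv_cancel_left _ _ hM,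
    nonsing_inv_mul_cancel_left _ _ hM]
  abel

section congruence
variable {ι κ : Type*} [Fintype ι] [Fintype κ]

lemma mul_mul_transpose_nonneg {X : Matrix ι ι ℝ} (hX : 0 ≤ X) (C : Matrix κ ι ℝ) :
    0 ≤ C * X * Cᵀ := by
  simpa [conjTranspose_eq_transpose_of_trivial, nonneg_iff_posSemidef] using
    (nonneg_iff_posSemidef.1 hX).mul_mul_conjTranspose_same C

lemma mul_mul_transpose_le_mul_mul_transpose {X Y : Matrix ι ι ℝ} (h : X ≤ Y)
    (C : Matrix κ ι ℝ) : C * X * Cᵀ ≤ C * Y * Cᵀ := by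
  have := mul_mul_transpose_nonneg (sub_nonneg.2 h) C
  rwa [Matrix.mul_sub, Matrix.sub_mul, sub_nonneg] at this

lemma exists_le_smul_of_posDef [DecidableEq ι] {A B : Matrix ι ι ℝ} (hA : A.PosDef)
    (hB : B.IsHermitian) : ∃ α : ℝ, 1 ≤ α ∧ B ≤ α • A := by
  cases isEmpty_or_nonempty ι
  · exact ⟨1, le_rfl, (Subsingleton.elim B (1 • A)).le⟩
  obtain ⟨ε, hε, hεA⟩ := (CFC.exists_pos_algebraMap_le_iff hA.isHermitian.isSelfAdjoint).2
    fun x hx => hA.isStrictlyPositive.spectrum_pos hx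
  obtain ⟨c, hc⟩ := B.finite_spectrum.bddAbove
  have hBc : B ≤ algebraMap ℝ _ c :=
    le_algebraMap_of_spectrum_le (fun x hx => hc hx) hB.isSelfAdjoint
  set α := max 1 (c / ε)
  have hcα : c ≤ α * ε := (div_le_iff₀ hε).1 (le_max_right _ _)
  refine ⟨α, le_max_left _ _, hBc.trans ?_⟩
  calc algebraMap ℝ _ c ≤ algebraMap ℝ (Matrix ι ι ℝ) (α * ε) := algebraMap_mono _ hcα
    _ = α • algebraMap ℝ _ ε := by rw [map_mul, Algebra.smul_def]
    _ ≤ α • A := smul_le_smul_of_nonneg_left hεA (by positivity)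

end congruence

section riccati
variable {m n : ℕ} {ν : Fin m → ℝ} {A W : Matrix (Fin n) (Fin n) ℝ}
  {B : Matrix (Fin n) (Fin m) ℝ} {U : Matrix (Fin m) (Fin m) ℝ}

lemma NI_transpose (I : Finset (Fin m)) : (NI I)ᵀ = NI I := diagonal_transpose _

lemma noise_term_nonneg (hW : 0 ≤ W) (hU : 0 ≤ U) (K : Matrix (Fin n) (Fin m) ℝ)
    (I : Finset (Fin m)) : 0 ≤ W + K * NI I * U * NI I * Kᵀ := by
  have := mul_mul_transpose_nonneg hU (K * NI I)
  rw [transpose_mul, NI_transpose, ← Matrix.mul_assoc] at this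
  exact add_nonneg hW this

lemma phi_nonneg (hW : 0 ≤ W) (hU : 0 ≤ U) (K : Matrix (Fin n) (Fin m) ℝ)
    {X : Matrix (Fin n) (Fin n) ℝ} (hX : 0 ≤ X) : 0 ≤ phi ν A W B U K X :=
  Finset.sum_nonneg fun I _ => smul_nonneg (sq_nonneg _) <|
    add_nonneg (mul_mul_transpose_nonneg hX _) (noise_term_nonneg hW hU K I)

lemma phi_mono (K : Matrix (Fin n) (Fin m) ℝ) : Monotone (phi ν A W B U K) := by
  intro X Y h
  unfold phi
  gcongr with I
  exact mul_mul_transpose_le_mul_mul_transpose h _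

lemma phi_smul_le (hW : 0 ≤ W) (hU : 0 ≤ U) (K : Matrix (Fin n) (Fin m) ℝ)
    (X : Matrix (Fin n) (Fin n) ℝ) {α : ℝ} (hα : 1 ≤ α) :
    phi ν A W B U K (α • X) ≤ α • phi ν A W B U K X := by
  unfold phi
  rw [Finset.smul_sum]
  gcongr with I
  rw [smul_comm α, smul_add α, Matrix.mul_smul, Matrix.smul_mul]
  gcongr
  exact le_smul_of_one_le_left (noise_term_nonneg hW hU K I) hα

lemma Mop_posDef (hν : ∀ i, ν i ∈ Set.Ioc (0 : ℝ) 1) (hU : U.PosDef)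
    {X : Matrix (Fin n) (Fin n) ℝ} (hX : 0 ≤ X) : (Mop ν B U X).PosDef := by
  have hC : (U + Bᵀ * X * B).PosDef := by
    refine hU.add_posSemidef (nonneg_iff_posSemidef.1 ?_)
    simpa using mul_mul_transpose_nonneg hX Bᵀ
  -- the summand `I = univ` alone is already positive definite, as all `ν i > 0`
  rw [Mop, ← Finset.add_sum_erase _ _ (Finset.mem_univ Finset.univ)]
  refine PosDef.add_posSemidef ?_ (nonneg_iff_posSemidef.1 <| Finset.sum_nonneg fun I _ => ?_)
  · have hNI : NI (Finset.univ : Finset (Fin m)) = 1 := by simp [NI, diagonal_one]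
    rw [hNI, Matrix.one_mul, Matrix.mul_one]
    refine hC.smul ?_
    rw [eta_sq fun i => Set.Ioc_subset_Icc_self (hν i), Finset.compl_univ, Finset.prod_empty,
      mul_one]
    exact Finset.prod_pos fun i _ => (hν i).1
  · refine smul_nonneg (sq_nonneg _) ?_
    simpa [NI_transpose] using mul_mul_transpose_nonneg hC.posSemidef.nonneg (NI I)

lemma phi_expand (hν : ∀ i, ν i ∈ Set.Icc (0 : ℝ) 1) (K : Matrix (Fin n) (Fin m) ℝ)
    {X : Matrix (Fin n) (Fin n) ℝ} (hX : Xᵀ = X) :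
    phi ν A W B U K X = Aᵀ * X * A + W + K * (Aᵀ * X * B * diagonal ν)ᵀ
      + Aᵀ * X * B * diagonal ν * Kᵀ + K * Mop ν B U X * Kᵀ := by
  have hterm : ∀ I, eta ν I ^ 2 •
      ((Aᵀ + K * NI I * Bᵀ) * X * (Aᵀ + K * NI I * Bᵀ)ᵀ + (W + K * NI I * U * NI I * Kᵀ))
      = eta ν I ^ 2 • (Aᵀ * X * A + W) + K * (eta ν I ^ 2 • NI I) * (Bᵀ * X * A)
        + Aᵀ * X * B * (eta ν I ^ 2 • NI I) * Kᵀ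
        + K * (eta ν I ^ 2 • (NI I * (U + Bᵀ * X * B) * NI I)) * Kᵀ := by
    intro I
    simp only [transpose_add, transpose_mul, transpose_transpose, NI_transpose, Matrix.mul_smul,
      Matrix.smul_mul, ← smul_add]
    congr 1
    simp only [Matrix.add_mul, Matrix.mul_add, Matrix.mul_assoc]
    abel
  simp only [phi, Mop, hterm, Finset.sum_add_distrib, ← Finset.sum_smul, ← Matrix.sum_mul,
    ← Matrix.mul_sum, sum_eta_sq hν, sum_eta_sq_smul_NI hν, one_smul]
  simp only [transpose_mul, transpose_transpose, diagonal_transpose, hX, Matrix.mul_assoc]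

noncomputable def riccatiGain (ν : Fin m → ℝ) (A : Matrix (Fin n) (Fin n) ℝ)
    (B : Matrix (Fin n) (Fin m) ℝ) (U : Matrix (Fin m) (Fin m) ℝ)
    (X : Matrix (Fin n) (Fin n) ℝ) : Matrix (Fin n) (Fin m) ℝ :=
  -(Aᵀ * X * B * diagonal ν * (Mop ν B U X)⁻¹)

lemma phi_eq_Pic_add (hν : ∀ i, ν i ∈ Set.Ioc (0 : ℝ) 1) (hU : U.PosDef)
    (K : Matrix (Fin n) (Fin m) ℝ) {X : Matrix (Fin n) (Fin n) ℝ} (hX : 0 ≤ X) :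
    phi ν A W B U K X = Pic ν A W B U X + (K - riccatiGain ν A B U X) * Mop ν B U X
      * (K - riccatiGain ν A B U X)ᵀ := by
  have hXt : Xᵀ = X := (isHermitian_iff_isSymm.1 (nonneg_iff_posSemidef.1 hX).isHermitian).eq
  have hM := Mop_posDef (B := B) hν hU hX
  have hPic : Aᵀ * X * B * diagonal ν * (Mop ν B U X)⁻¹ * diagonal ν * Bᵀ * X * A
      = Aᵀ * X * B * diagonal ν * (Mop ν B U X)⁻¹ * (Aᵀ * X * B * diagonal ν)ᵀ := by
    simp only [transpose_mul, transpose_transpose, diagonal_transpose, hXt, Matrix.mul_assoc]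
  rw [riccatiGain, sub_neg_eq_add, add_mul_inv_mul_transpose_add hM.det_pos.ne'.isUnit
    (isHermitian_iff_isSymm.1 hM.isHermitian).eq,
    phi_expand (fun i => Set.Ioc_subset_Icc_self (hν i)) K hXt, Pic, hPic]
  abel

lemma Pic_le_phi (hν : ∀ i, ν i ∈ Set.Ioc (0 : ℝ) 1) (hU : U.PosDef)
    (K : Matrix (Fin n) (Fin m) ℝ) {X : Matrix (Fin n) (Fin n) ℝ} (hX : 0 ≤ X) :
    Pic ν A W B U X ≤ phi ν A W B U K X := by
  rw [phi_eq_Pic_add hν hU K hX]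
  exact le_add_of_nonneg_right <|
    mul_mul_transpose_nonneg (Mop_posDef hν hU hX).posSemidef.nonneg _

lemma Pic_eq_phi_riccatiGain (hν : ∀ i, ν i ∈ Set.Ioc (0 : ℝ) 1) (hU : U.PosDef)
    {X : Matrix (Fin n) (Fin n) ℝ} (hX : 0 ≤ X) :
    Pic ν A W B U X = phi ν A W B U (riccatiGain ν A B U X) X := by
  simp [phi_eq_Pic_add hν hU _ hX]

lemma Pic_nonneg (hν : ∀ i, ν i ∈ Set.Ioc (0 : ℝ) 1) (hW : 0 ≤ W) (hU : U.PosDef)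
    {X : Matrix (Fin n) (Fin n) ℝ} (hX : 0 ≤ X) : 0 ≤ Pic ν A W B U X := by
  rw [Pic_eq_phi_riccatiGain hν hU hX]
  exact phi_nonneg hW hU.posSemidef.nonneg _ hX

lemma mapsTo_Pic (hν : ∀ i, ν i ∈ Set.Ioc (0 : ℝ) 1) (hW : 0 ≤ W) (hU : U.PosDef)
    {K : Matrix (Fin n) (Fin m) ℝ} {S : Matrix (Fin n) (Fin n) ℝ}
    (hS : phi ν A W B U K S ≤ S) {α : ℝ} (hα : 1 ≤ α) :
    Set.MapsTo (Pic ν A W B U) (Set.Icc 0 (α • S)) (Set.Icc 0 (α • S)) := by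
  rintro X ⟨hX0, hXS⟩
  refine ⟨Pic_nonneg hν hW hU hX0, ?_⟩
  calc Pic ν A W B U X ≤ phi ν A W B U K X := Pic_le_phi hν hU K hX0
    _ ≤ phi ν A W B U K (α • S) := phi_mono K hXS
    _ ≤ α • phi ν A W B U K S := phi_smul_le hW hU.posSemidef.nonneg K S hα
    _ ≤ α • S := smul_le_smul_of_nonneg_left hS (by linarith)

end riccati

theorem Pic_iterate_bounded_general (m n : ℕ) (ν : Fin m → ℝ)
    (hν : ∀ i, ν i ∈ Set.Ioc (0 : ℝ) 1)
    (A W : Matrix (Fin n) (Fin n) ℝ) (B : Matrix (Fin n) (Fin m) ℝ)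
    (U : Matrix (Fin m) (Fin m) ℝ) (hW : W.PosSemidef) (hU : U.PosDef)
    (Kbar : Matrix (Fin n) (Fin m) ℝ) (Sbar : Matrix (Fin n) (Fin n) ℝ)
    (hSbar : Sbar.PosSemidef) (hphi : (Sbar - phi ν A W B U Kbar Sbar).PosDef)
    (S₀ : Matrix (Fin n) (Fin n) ℝ) (hS₀ : S₀.PosSemidef) :
    ∃ MS : Matrix (Fin n) (Fin n) ℝ,
      ∀ k : ℕ, (MS - (fun X => Pic ν A W B U X)^[k] S₀).PosSemidef := by
  have hphi_nonneg : 0 ≤ phi ν A W B U Kbar Sbar :=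
    phi_nonneg hW.nonneg hU.posSemidef.nonneg Kbar hSbar.nonneg
  have hSbar_pos : Sbar.PosDef := by
    simpa using hphi.add_posSemidef (nonneg_iff_posSemidef.1 hphi_nonneg)
  obtain ⟨α, hα, hS₀α⟩ := exists_le_smul_of_posDef hSbar_pos hS₀.isHermitian
  have hSbar_stable : phi ν A W B U Kbar Sbar ≤ Sbar := le_iff.2 hphi.posSemidef
  exact ⟨α • Sbar, fun k =>
    ((mapsTo_Pic hν hW.nonneg hU hSbar_stable hα).iterate k ⟨hS₀.nonneg, hS₀α⟩).2⟩

/-- Lemma L2: if there exist K̄ and a positive semidefinite S̄ with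
φ(K̄, S̄) ≺ S̄, then for every positive semidefinite S₀, the sequence
S_{k+1} = Π_c(S_k) is bounded above in the Loewner order. -/
theorem Pic_iterate_bounded (m n : ℕ) (hm : 0 < m) (hn : 0 < n) (ν : Fin m → ℝ)
    (hν : ∀ i, ν i ∈ Set.Ioc (0 : ℝ) 1)
    (A W : Matrix (Fin n) (Fin n) ℝ) (B : Matrix (Fin n) (Fin m) ℝ)
    (U : Matrix (Fin m) (Fin m) ℝ) (hW : W.PosSemidef) (hU : U.PosDef)
    (Kbar : Matrix (Fin n) (Fin m) ℝ) (Sbar : Matrix (Fin n) (Fin n) ℝ)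
    (hSbar : Sbar.PosSemidef) (hphi : (Sbar - phi ν A W B U Kbar Sbar).PosDef)
    (S₀ : Matrix (Fin n) (Fin n) ℝ) (hS₀ : S₀.PosSemidef) :
    ∃ MS : Matrix (Fin n) (Fin n) ℝ,
      ∀ k : ℕ, (MS - (fun X => Pic ν A W B U X)^[k] S₀).PosSemidef :=
  Pic_iterate_bounded_general m n ν hν A W B U hW hU Kbar Sbar hSbar hphi S₀ hS₀
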